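/- arXiv:2309.02960 — 4 statements merged into one kernel-verified Lean document; each statement's English description precedes it below -/
import Mathlib

section
/- Let X ⊆ ℤ^{n₁} with k₁-adjacency and Y ⊆ ℤ^{n₂} with k₂-adjacency be digital images. Every radius 2-local (k₁,k₂)-isomorphism h : X → Y is a local (k₁,k₂)-isomorphism. -/
/-- Two points of `ℤⁿ` are `k(t,n)`-adjacent if they are distinct, at most `t` of their
coordinates differ by exactly `1` in absolute value, and all other coordinates coincide. -/
def DigAdj {n : ℕ} (t : ℕ) (p q : Fin n → ℤ) : Prop :=
  p ≠ q ∧ (∀ i, p i = q i ∨ |p i - q i| = 1) ∧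
    (Finset.univ.filter fun i => p i ≠ q i).card ≤ t

/-- The adjacency relation induced on a digital image `X ⊆ ℤⁿ`. -/
def adjOn {n : ℕ} (t : ℕ) (X : Set (Fin n → ℤ)) (x y : X) : Prop :=
  DigAdj t (x : Fin n → ℤ) (y : Fin n → ℤ)

/-- Digital `(k₁,k₂)`-continuity of a map between digital images. -/
def DigContinuous {n₁ n₂ : ℕ} (t₁ t₂ : ℕ) (X : Set (Fin n₁ → ℤ)) (Y : Set (Fin n₂ → ℤ))
    (f : X → Y) : Prop :=
  ∀ x x' : X, adjOn t₁ X x x' → f x = f x' ∨ adjOn t₂ Y (f x) (f x')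

/-- There is a `k`-path of length at most `ε` (w.r.t. an adjacency `adj`) from `x` to `y`;
equivalently, the length `l_k(x,y)` of a shortest `k`-path from `x` to `y` is at most `ε`. -/
def reachesIn {α : Type*} (adj : α → α → Prop) (x y : α) (ε : ℕ) : Prop :=
  ∃ l, l ≤ ε ∧ ∃ c : ℕ → α, c 0 = x ∧ c l = y ∧ ∀ i, i < l → adj (c i) (c (i + 1))

/-- The digital neighborhood `N_k(x₀, ε) = {x : l_k(x₀,x) ≤ ε} ∪ {x₀}`. -/
def Nbd {α : Type*} (adj : α → α → Prop) (x₀ : α) (ε : ℕ) : Set α :=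
  {x | reachesIn adj x₀ x ε} ∪ {x₀}

/-- `f` maps `A` `(k₁,k₂)`-isomorphically onto `B`: the restriction of `f` is a bijection
from `A` onto `B` which is `(k₁,k₂)`-continuous and whose inverse is `(k₂,k₁)`-continuous. -/
def IsIsoOn {α β : Type*} (adjA : α → α → Prop) (adjB : β → β → Prop)
    (f : α → β) (A : Set α) (B : Set β) : Prop :=
  Set.BijOn f A B ∧
    (∀ x ∈ A, ∀ x' ∈ A, adjA x x' → f x = f x' ∨ adjB (f x) (f x')) ∧
    (∀ x ∈ A, ∀ x' ∈ A, adjB (f x) (f x') → x = x' ∨ adjA x x')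

/-- A local `(k₁,k₂)`-isomorphism: for every `x ∈ X`, `h` maps `N_{k₁}(x,1)`
`(k₁,k₂)`-isomorphically onto `N_{k₂}(h(x),1)`. -/
def LocalIso {n₁ n₂ : ℕ} (t₁ t₂ : ℕ) (X : Set (Fin n₁ → ℤ)) (Y : Set (Fin n₂ → ℤ))
    (h : X → Y) : Prop :=
  ∀ x : X, IsIsoOn (adjOn t₁ X) (adjOn t₂ Y) h
    (Nbd (adjOn t₁ X) x 1) (Nbd (adjOn t₂ Y) (h x) 1)

/-- A radius `2`-local `(k₁,k₂)`-isomorphism: for every `x ∈ X`, `h` maps `N_{k₁}(x,2)`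
`(k₁,k₂)`-isomorphically onto `N_{k₂}(h(x),2)`. -/
def Radius2LocalIso {n₁ n₂ : ℕ} (t₁ t₂ : ℕ) (X : Set (Fin n₁ → ℤ)) (Y : Set (Fin n₂ → ℤ))
    (h : X → Y) : Prop :=
  ∀ x : X, IsIsoOn (adjOn t₁ X) (adjOn t₂ Y) h
    (Nbd (adjOn t₁ X) x 2) (Nbd (adjOn t₂ Y) (h x) 2)

lemma mem_Nbd_one {α : Type*} {adj : α → α → Prop} {x y : α} :
    y ∈ Nbd adj x 1 ↔ y = x ∨ adj x y := by
  constructor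
  · rintro (⟨l, hl, c, rfl, rfl, hadj⟩ | rfl)
    · interval_cases l
      · exact Or.inl rfl
      · exact Or.inr (hadj 0 zero_lt_one)
    · exact Or.inl rfl
  · rintro (rfl | hadj)
    · exact Or.inr rfl
    · exact Or.inl ⟨1, le_rfl, fun i => if i = 0 then x else y, rfl, rfl,
        fun i hi => by obtain rfl := Nat.lt_one_iff.mp hi; exact hadj⟩

lemma self_mem_Nbd {α : Type*} (adj : α → α → Prop) (x : α) (ε : ℕ) : x ∈ Nbd adj x ε :=
  Or.inr rfl

lemma Nbd_mono {α : Type*} (adj : α → α → Prop) (x : α) {ε ε' : ℕ} (h : ε ≤ ε') :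
    Nbd adj x ε ⊆ Nbd adj x ε' := by
  rintro y (⟨l, hl, hc⟩ | rfl)
  · exact Or.inl ⟨l, hl.trans h, hc⟩
  · exact self_mem_Nbd adj y ε'

section IsIsoOn

variable {α β : Type*} {adjA : α → α → Prop} {adjB : β → β → Prop} {f : α → β}

lemma IsIsoOn.mono {A A' : Set α} {B B' : Set β} (hf : IsIsoOn adjA adjB f A B)
    (hA : A' ⊆ A) (hmaps : Set.MapsTo f A' B') (hsurj : Set.SurjOn f A' B') :
    IsIsoOn adjA adjB f A' B' :=
  ⟨⟨hmaps, hf.1.injOn.mono hA, hsurj⟩,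
    fun a ha b hb hab => hf.2.1 a (hA ha) b (hA hb) hab,
    fun a ha b hb hab => hf.2.2 a (hA ha) b (hA hb) hab⟩

lemma IsIsoOn.Nbd_one {x : α} {ε : ℕ} (hε : 1 ≤ ε)
    (hf : IsIsoOn adjA adjB f (Nbd adjA x ε) (Nbd adjB (f x) ε)) :
    IsIsoOn adjA adjB f (Nbd adjA x 1) (Nbd adjB (f x) 1) := by
  have hx := self_mem_Nbd adjA x ε
  refine hf.mono (Nbd_mono adjA x hε) ?_ ?_
  · intro y hy
    rcases mem_Nbd_one.mp hy with rfl | hxy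
    · exact self_mem_Nbd adjB _ 1
    · exact mem_Nbd_one.mpr ((hf.2.1 x hx y (Nbd_mono adjA x hε hy) hxy).imp Eq.symm id)
  · intro z hz
    rcases mem_Nbd_one.mp hz with rfl | hxz
    · exact ⟨x, self_mem_Nbd adjA x 1, rfl⟩
    · obtain ⟨y, hy, rfl⟩ := hf.1.surjOn (Nbd_mono adjB _ hε hz)
      exact ⟨y, mem_Nbd_one.mpr ((hf.2.2 x hx y hy hxz).imp Eq.symm id), rfl⟩

end IsIsoOn

theorem radius2LocalIso_localIso_general
    {n₁ n₂ t₁ t₂ : ℕ}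
    (X : Set (Fin n₁ → ℤ)) (Y : Set (Fin n₂ → ℤ)) (h : X → Y)
    (hr : Radius2LocalIso t₁ t₂ X Y h) :
    LocalIso t₁ t₂ X Y h :=
  fun x => (hr x).Nbd_one one_le_two

/-- every radius `2`-local `(k₁,k₂)`-isomorphism is a local
`(k₁,k₂)`-isomorphism. -/
theorem radius2LocalIso_localIso
    {n₁ n₂ t₁ t₂ : ℕ} (ht₁ : 1 ≤ t₁) (ht₁n : t₁ ≤ n₁) (ht₂ : 1 ≤ t₂) (ht₂n : t₂ ≤ n₂)
    (X : Set (Fin n₁ → ℤ)) (Y : Set (Fin n₂ → ℤ)) (h : X → Y)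
    (hr : Radius2LocalIso t₁ t₂ X Y h) :
    LocalIso t₁ t₂ X Y h :=
  radius2LocalIso_localIso_general X Y h hr
end

section
/- There exist digital images X ⊆ ℤ^{n₁} with k₁-adjacency and Y ⊆ ℤ^{n₂} with k₂-adjacency and a map h : X → Y that is a local (k₁,k₂)-isomorphism but not a radius 2-local (k₁,k₂)-isomorphism. -/
/-!
The eight boundary points of the `3 × 3` square form a `4`-connected cycle of length `8`, and
the unit square one of length `4`. Winding the first cycle twice around the second is a local
isomorphism, since a radius-1 neighbourhood in either cycle is just a point and its two cycle
neighbours. It is not a radius-2 local isomorphism: the two points at distance `2` from a point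
of the long cycle are sent to the same point, the one opposite in the short cycle.
-/

section Neighborhoods

variable {α : Type*} (adj : α → α → Prop)

theorem reachesIn_one_iff {x y : α} : reachesIn adj x y 1 ↔ x = y ∨ adj x y := by
  constructor
  · rintro ⟨l, hl, c, rfl, rfl, hc⟩
    interval_cases l
    · exact Or.inl rfl
    · exact Or.inr (hc 0 zero_lt_one)
  · rintro (rfl | hxy)
    · exact ⟨0, zero_le_one, fun _ => x, rfl, rfl, by simp⟩
    · refine ⟨1, le_rfl, fun i => if i = 0 then x else y, rfl, rfl, ?_⟩
      intro i hi
      obtain rfl : i = 0 := Nat.lt_one_iff.mp hi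
      exact hxy

theorem Nbd_one (x : α) : Nbd adj x 1 = {y | x = y ∨ adj x y} := by
  ext y
  simp only [Nbd, reachesIn_one_iff, Set.mem_union, Set.mem_ofPred_eq, Set.mem_singleton_iff]
  exact or_iff_left_of_imp fun h => Or.inl h.symm

theorem mem_Nbd_two_of_adj_of_adj {x y z : α} (hxy : adj x y) (hyz : adj y z) :
    z ∈ Nbd adj x 2 := by
  refine Or.inl ⟨2, le_rfl, fun i => if i = 0 then x else if i = 1 then y else z, rfl, rfl, ?_⟩
  intro i hi
  interval_cases i
  · exact hxy
  · exact hyz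

end Neighborhoods

instance {α β : Type*} [Fintype α] [Fintype β] [DecidableEq α] [DecidableEq β] (f : α → β)
    (A : Set α) (B : Set β) [DecidablePred (· ∈ A)] [DecidablePred (· ∈ B)] :
    Decidable (Set.BijOn f A B) := by
  unfold Set.BijOn Set.MapsTo Set.InjOn Set.SurjOn
  simp only [Set.subset_def, Set.mem_image]
  infer_instance

instance {α β : Type*} [Fintype α] [Fintype β] [DecidableEq α] [DecidableEq β]
    (adjA : α → α → Prop) (adjB : β → β → Prop) [DecidableRel adjA] [DecidableRel adjB]
    (f : α → β) (A : Set α) (B : Set β) [DecidablePred (· ∈ A)] [DecidablePred (· ∈ B)] :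
    Decidable (IsIsoOn adjA adjB f A B) := by
  unfold IsIsoOn
  infer_instance

instance {n t : ℕ} (X : Set (Fin n → ℤ)) : DecidableRel (adjOn t X) := fun x y => by
  unfold adjOn DigAdj
  infer_instance

def octagon : Finset (Fin 2 → ℤ) :=
  {![0, 0], ![1, 0], ![2, 0], ![2, 1], ![2, 2], ![1, 2], ![0, 2], ![0, 1]}

def unitSquare : Finset (Fin 2 → ℤ) := {![0, 0], ![1, 0], ![1, 1], ![0, 1]}

/-- Traversing `octagon` once in the order listed traverses `unitSquare` twice. -/
def foldOctagon (p : Fin 2 → ℤ) : Fin 2 → ℤ :=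
  if p = ![2, 0] then ![1, 1]
  else if p = ![2, 1] then ![0, 1]
  else if p = ![2, 2] then ![0, 0]
  else if p = ![1, 2] then ![1, 0]
  else if p = ![0, 2] then ![1, 1]
  else p

theorem foldOctagon_mem_unitSquare : ∀ p ∈ octagon, foldOctagon p ∈ unitSquare := by
  decide

def wrapOctagon (p : (octagon : Set (Fin 2 → ℤ))) : (unitSquare : Set (Fin 2 → ℤ)) :=
  ⟨foldOctagon p, foldOctagon_mem_unitSquare p p.2⟩

theorem localIso_wrapOctagon : LocalIso 1 1 _ _ wrapOctagon := by
  simp only [LocalIso, Nbd_one]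
  decide

theorem not_radius2LocalIso_wrapOctagon : ¬ Radius2LocalIso 1 1 _ _ wrapOctagon := by
  intro h
  let X : Set (Fin 2 → ℤ) := octagon
  let origin : X := ⟨![0, 0], by decide⟩
  let east : X := ⟨![2, 0], by decide⟩
  let north : X := ⟨![0, 2], by decide⟩
  have hEast : east ∈ Nbd (adjOn 1 X) origin 2 := by
    refine mem_Nbd_two_of_adj_of_adj _ (y := ⟨![1, 0], by decide⟩) ?_ ?_ <;> decide
  have hNorth : north ∈ Nbd (adjOn 1 X) origin 2 := by
    refine mem_Nbd_two_of_adj_of_adj _ (y := ⟨![0, 1], by decide⟩) ?_ ?_ <;> decide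
  have : east = north := (h origin).1.injOn hEast hNorth rfl -- both fold onto `![1, 1]`
  exact absurd (congrArg Subtype.val this) (by decide)

/-- there exist digital images and a map between them that is a local
`(k₁,k₂)`-isomorphism but not a radius `2`-local `(k₁,k₂)`-isomorphism. -/
theorem exists_localIso_not_radius2LocalIso :
    ∃ (n₁ n₂ t₁ t₂ : ℕ), 1 ≤ t₁ ∧ t₁ ≤ n₁ ∧ 1 ≤ t₂ ∧ t₂ ≤ n₂ ∧
      ∃ (X : Set (Fin n₁ → ℤ)) (Y : Set (Fin n₂ → ℤ)) (h : X → Y),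
        LocalIso t₁ t₂ X Y h ∧ ¬ Radius2LocalIso t₁ t₂ X Y h :=
  ⟨2, 2, 1, 1, le_rfl, one_le_two, le_rfl, one_le_two, _, _, wrapOctagon,
    localIso_wrapOctagon, not_radius2LocalIso_wrapOctagon⟩
end

section
/- Let SC_k^{n,4} = (s_i)_{i=0}^{3} be a simple closed k-curve with 4 elements in ℤⁿ, n ≥ 2, and let p : ℤ → {s₀,s₁,s₂,s₃} be given by p(t) = s_{t mod 4}, where ℤ carries the 2-adjacency. Then p is not a radius 2-local (2,k)-isomorphism. -/
/-- A simple closed `k`-curve `SC_k^{n,l}` with `l` elements in `ℤⁿ`: a sequence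
`(s_i)_{i=0}^{l-1}` of distinct points such that `s_i` and `s_j` are `k`-adjacent
if and only if `i - j ≡ ±1 (mod l)`. -/
def IsSC {n : ℕ} (t l : ℕ) (s : ZMod l → (Fin n → ℤ)) : Prop :=
  Function.Injective s ∧
    ∀ i j : ZMod l, DigAdj t (s i) (s j) ↔ (i = j + 1 ∨ j = i + 1)

/-!
The neighbourhood `N_2(0,2)` of `ℤ` is `{-2,…,2}`, which has five points, while the curve has
only four; concretely `p(2) = s₂ = p(-2)`, so `p` is not injective on `N_2(0,2)`.
-/

def linePoint (m : ℤ) : (Set.univ : Set (Fin 1 → ℤ)) :=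
  ⟨fun _ => m, trivial⟩

lemma linePoint_injective : Function.Injective linePoint :=
  fun _ _ h => congrFun (Subtype.ext_iff.mp h) 0

lemma adjOn_linePoint {a b : ℤ} (hab : |a - b| = 1) :
    adjOn 1 Set.univ (linePoint a) (linePoint b) := by
  refine ⟨fun h => ?_, fun _ => Or.inr hab, ?_⟩
  · have : a = b := congrFun h 0
    simp [this] at hab
  · exact (Finset.card_filter_le _ _).trans (by simp)

lemma linePoint_add_mem_nbd (m i : ℤ) {r : ℕ} (hi : |i| ≤ r) :
    linePoint (m + i) ∈ Nbd (adjOn 1 Set.univ) (linePoint m) r := by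
  rw [Int.abs_eq_natAbs] at hi
  refine Or.inl ⟨i.natAbs, by omega, fun k => linePoint (m + i.sign * k), by simp, ?_, ?_⟩
  · simp only [Int.sign_mul_natAbs]
  · intro k hk
    apply adjOn_linePoint
    have hsign : |i.sign| = 1 := Int.abs_sign_of_ne_zero (by omega)
    push_cast
    rw [show m + i.sign * k - (m + i.sign * (k + 1)) = -i.sign by ring, abs_neg, hsign]

theorem Radius2LocalIso.apply_linePoint_add_ne {n t : ℕ} {Y : Set (Fin n → ℤ)}
    {h : ↥(Set.univ : Set (Fin 1 → ℤ)) → Y} (hh : Radius2LocalIso 1 t Set.univ Y h) (m : ℤ)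
    {i j : ℤ} (hi : |i| ≤ 2) (hj : |j| ≤ 2) (hij : i ≠ j) :
    h (linePoint (m + i)) ≠ h (linePoint (m + j)) := fun heq =>
  hij <| add_left_cancel <| linePoint_injective <|
    (hh (linePoint m)).1.injOn (linePoint_add_mem_nbd m i hi) (linePoint_add_mem_nbd m j hj) heq

theorem sc4_covering_not_radius2LocalIso_general
    {n t : ℕ}
    (s : ZMod 4 → (Fin n → ℤ)) :
    ¬ Radius2LocalIso 1 t (Set.univ : Set (Fin 1 → ℤ)) (Set.range s)
      (fun x => ⟨s (((x : Fin 1 → ℤ) 0 : ℤ) : ZMod 4), Set.mem_range_self _⟩) := by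
  intro h
  have hwrap : ((2 : ℤ) : ZMod 4) = ((-2 : ℤ) : ZMod 4) := by decide
  exact Radius2LocalIso.apply_linePoint_add_ne h 0 (i := 2) (j := -2)
    (by norm_num) (by norm_num) (by norm_num) (Subtype.ext (by simp only [linePoint, zero_add, hwrap]))

/-- for `l = 4`, the map `p : ℤ → SC_k^{n,4}`, `p(t) = s_{t mod 4}`,
where `ℤ = ℤ¹` carries the `2 = k(1,1)`-adjacency, is not a radius `2`-local
`(2,k)`-isomorphism. -/
theorem sc4_covering_not_radius2LocalIso
    {n t : ℕ} (hn : 2 ≤ n) (ht : 1 ≤ t) (htn : t ≤ n)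
    (s : ZMod 4 → (Fin n → ℤ)) (hs : IsSC t 4 s) :
    ¬ Radius2LocalIso 1 t (Set.univ : Set (Fin 1 → ℤ)) (Set.range s)
      (fun x => ⟨s (((x : Fin 1 → ℤ) 0 : ℤ) : ZMod 4), Set.mem_range_self _⟩) :=
  sc4_covering_not_radius2LocalIso_general s
end

section
/- For every n ≥ 2 and every simple closed (3ⁿ−1)-curve SC_{3ⁿ−1}^{n,4} = (s_i)_{i=0}^{3} with 4 elements in ℤⁿ, the digital image SC_{3ⁿ−1}^{n,4} is pointed (3ⁿ−1)-contractible: the identity map of SC_{3ⁿ−1}^{n,4} is pointed (3ⁿ−1)-homotopic to the constant map with value s₀, via a homotopy fixing s₀. -/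
/-!
Via `s`, the curve is isomorphic as an adjacency graph to the 4-cycle `ZMod 4`, so it suffices
to contract the 4-cycle. The retraction `2 ↦ 1`, `0, 1, 3 ↦ 0` maps adjacent vertices to equal or
adjacent ones, moves each vertex by at most one step and fixes `0`; its iterates
`id, r, r ∘ r = const 0` form the pointed homotopy.
-/

def CycleAdj {l : ℕ} (i j : ZMod l) : Prop := i = j + 1 ∨ j = i + 1

lemma eq_or_cycleAdj_iterate {l : ℕ} {φ : ZMod l → ZMod l}
    (hφ : ∀ a b, CycleAdj a b → φ a = φ b ∨ CycleAdj (φ a) (φ b)) (k : ℕ) {a b : ZMod l}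
    (hab : a = b ∨ CycleAdj a b) : φ^[k] a = φ^[k] b ∨ CycleAdj (φ^[k] a) (φ^[k] b) := by
  induction k with
  | zero => exact hab
  | succ k ih =>
    simp only [Function.iterate_succ_apply']
    rcases ih with h | h
    · exact Or.inl (congrArg φ h)
    · exact hφ _ _ h

namespace IsSC

variable {n t l : ℕ} {s : ZMod l → Fin n → ℤ} (hs : IsSC t l s)

noncomputable def equiv : ZMod l ≃ Set.range s := Equiv.ofInjective s hs.1

lemma equiv_zero : hs.equiv 0 = ⟨s 0, Set.mem_range_self 0⟩ := rfl

lemma eq_or_adjOn_equiv {a b : ZMod l} (hab : a = b ∨ CycleAdj a b) :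
    hs.equiv a = hs.equiv b ∨ adjOn t (Set.range s) (hs.equiv a) (hs.equiv b) := by
  rcases hab with h | h
  · exact Or.inl (congrArg hs.equiv h)
  · exact Or.inr ((hs.2 a b).mpr h)

lemma digContinuous_conj {φ : ZMod l → ZMod l}
    (hφ : ∀ a b, CycleAdj a b → φ a = φ b ∨ CycleAdj (φ a) (φ b)) :
    DigContinuous t t (Set.range s) (Set.range s) (hs.equiv ∘ φ ∘ hs.equiv.symm) := by
  intro x x' hxx'
  obtain ⟨a, rfl⟩ := hs.equiv.surjective x
  obtain ⟨b, rfl⟩ := hs.equiv.surjective x'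
  simp only [Function.comp_apply, Equiv.symm_apply_apply]
  exact hs.eq_or_adjOn_equiv (hφ a b ((hs.2 a b).mp hxx'))

end IsSC

def retract4 (i : ZMod 4) : ZMod 4 := if i = 2 then 1 else 0

lemma retract4_zero : retract4 0 = 0 := by decide

lemma retract4_iterate_two : ∀ a : ZMod 4, retract4^[2] a = 0 := by decide

lemma retract4_map_cycleAdj :
    ∀ a b : ZMod 4, CycleAdj a b →
      retract4 a = retract4 b ∨ CycleAdj (retract4 a) (retract4 b) := by
  unfold CycleAdj; decide

lemma eq_or_cycleAdj_retract4 : ∀ a : ZMod 4, a = retract4 a ∨ CycleAdj a (retract4 a) := by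
  unfold CycleAdj; decide

theorem sc4_pointed_contractible_general
    {n : ℕ} (s : ZMod 4 → (Fin n → ℤ)) (hs : IsSC n 4 s) :
    ∃ m : ℕ, ∃ H : ↥(Set.range s) → ℕ → ↥(Set.range s),
      (∀ x, H x 0 = x) ∧
      (∀ x, H x m = ⟨s 0, Set.mem_range_self 0⟩) ∧
      (∀ i, i ≤ m → DigContinuous n n (Set.range s) (Set.range s) (fun x => H x i)) ∧
      (∀ x, ∀ i, i < m →
        H x i = H x (i + 1) ∨ adjOn n (Set.range s) (H x i) (H x (i + 1))) ∧
      (∀ i, i ≤ m → H ⟨s 0, Set.mem_range_self 0⟩ i = ⟨s 0, Set.mem_range_self 0⟩) := by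
  refine ⟨2, fun x i => hs.equiv (retract4^[i] (hs.equiv.symm x)), fun x => by simp,
    fun x => by simp only [retract4_iterate_two, hs.equiv_zero], fun i _ => ?_, fun x i _ => ?_,
    fun i _ => ?_⟩
  · exact hs.digContinuous_conj fun a b hab =>
      eq_or_cycleAdj_iterate retract4_map_cycleAdj i (Or.inr hab)
  · dsimp only
    rw [Function.iterate_succ_apply']
    exact hs.eq_or_adjOn_equiv (eq_or_cycleAdj_retract4 _)
  · dsimp only
    rw [← hs.equiv_zero, Equiv.symm_apply_apply, Function.iterate_fixed retract4_zero]

/-- for every `n ≥ 2`, any simple closed `(3ⁿ-1)`-curve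
`SC_{3ⁿ-1}^{n,4}` (note `k(n,n) = 3ⁿ-1`) is pointed `(3ⁿ-1)`-contractible: the identity
map is `(3ⁿ-1)`-homotopic to the constant map at `s₀` via a homotopy fixing `s₀`. -/
theorem sc4_pointed_contractible
    {n : ℕ} (hn : 2 ≤ n) (s : ZMod 4 → (Fin n → ℤ)) (hs : IsSC n 4 s) :
    ∃ m : ℕ, ∃ H : ↥(Set.range s) → ℕ → ↥(Set.range s),
      (∀ x, H x 0 = x) ∧
      (∀ x, H x m = ⟨s 0, Set.mem_range_self 0⟩) ∧
      (∀ i, i ≤ m → DigContinuous n n (Set.range s) (Set.range s) (fun x => H x i)) ∧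
      (∀ x, ∀ i, i < m →
        H x i = H x (i + 1) ∨ adjOn n (Set.range s) (H x i) (H x (i + 1))) ∧
      (∀ i, i ≤ m → H ⟨s 0, Set.mem_range_self 0⟩ i = ⟨s 0, Set.mem_range_self 0⟩) :=
  sc4_pointed_contractible_general s hs
end
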